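/- Let m be a positive integer and ħ ≠ 0. For k ≥ 1 define operators on Laurent polynomials: j_k^{(m)} = (1/(m+1))·z^{(m+1)k} (multiplication), and for k ≥ 0, l_k^{(m)} = (1/(m+1))·( −z^{(m+1)k}(θ + ((m+1)k+1)/2) − (1/ħ)·z^{(m+1)k+m} ), where θ = z·(d/dz). Then [j_k^{(m)}, j_{k'}^{(m)}] = 0, [j_k^{(m)}, l_{k'}^{(m)}] = k·j_{k+k'}^{(m)}, and [l_k^{(m)}, l_{k'}^{(m)}] = (k−k')·l_{k+k'}^{(m)}. -/
import Mathlib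

set_option maxHeartbeats 1600000


/- We model the Laurent polynomial ring `F[z, z⁻¹]` (with `F` a field of characteristic
zero, thought of as `ℚ(ħ)`) by its coefficient space `ℤ →₀ F`. -/

/-- Multiplication by `z^k`. -/
noncomputable def Jop (F : Type*) [Field F] (k : ℤ) : (ℤ →₀ F) →ₗ[F] (ℤ →₀ F) :=
  Finsupp.lmapDomain F F (· + k)

/-- The Euler operator `θ = z·(d/dz)`, `θ(z^n) = n·z^n`. -/
noncomputable def euler (F : Type*) [Field F] : (ℤ →₀ F) →ₗ[F] (ℤ →₀ F) :=
  Finsupp.lsum F fun n : ℤ => (n : F) • Finsupp.lsingle n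

/-- `j_k^{(m)} = (1/(m+1))·z^{(m+1)k}`. -/
noncomputable def Jm (F : Type*) [Field F] (m : ℕ) (k : ℤ) : (ℤ →₀ F) →ₗ[F] (ℤ →₀ F) :=
  ((1 : F) / ((m : F) + 1)) • Jop F (((m : ℤ) + 1) * k)

/-- `l_k^{(m)} = (1/(m+1))·(−z^{(m+1)k}(θ + ((m+1)k+1)/2) − (1/ħ)·z^{(m+1)k+m})`. -/
noncomputable def Lm (F : Type*) [Field F] (hbar : F) (m : ℕ) (k : ℤ) :
    (ℤ →₀ F) →ₗ[F] (ℤ →₀ F) :=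
  ((1 : F) / ((m : F) + 1)) •
    (-(Jop F (((m : ℤ) + 1) * k) ∘ₗ
        (euler F + ((((m : F) + 1) * (k : F) + 1) / 2) • LinearMap.id))
      - ((1 : F) / hbar) • Jop F (((m : ℤ) + 1) * k + m))

lemma Jop_single (F : Type*) [Field F] (a n : ℤ) (c : F) :
    Jop F a (Finsupp.single n c) = Finsupp.single (n + a) c := by
  simp only [Jop, Finsupp.lmapDomain_apply, Finsupp.mapDomain_single]

lemma euler_single (F : Type*) [Field F] (n : ℤ) (c : F) :
    euler F (Finsupp.single n c) = Finsupp.single n ((n : F) * c) := by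
  simp only [euler, Finsupp.lsum_single, LinearMap.smul_apply, Finsupp.lsingle_apply,
    Finsupp.smul_single, smul_eq_mul]

lemma Jop_comp (F : Type*) [Field F] (a b : ℤ) : Jop F a ∘ₗ Jop F b = Jop F (b + a) := by
  apply Finsupp.lhom_ext
  intro n c
  simp only [LinearMap.comp_apply, Jop_single, add_assoc]

lemma euler_comp_Jop (F : Type*) [Field F] (a : ℤ) :
    euler F ∘ₗ Jop F a = Jop F a ∘ₗ euler F + (a : F) • Jop F a := by
  apply Finsupp.lhom_ext
  intro n c
  simp only [LinearMap.comp_apply, LinearMap.add_apply, LinearMap.smul_apply, Jop_single,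
    euler_single, Finsupp.smul_single, smul_eq_mul]
  rw [← Finsupp.single_add]
  congr 1
  push_cast
  ring

lemma Jop_comp' (F : Type*) [Field F] (a b : ℤ) (f : (ℤ →₀ F) →ₗ[F] (ℤ →₀ F)) :
    Jop F a ∘ₗ (Jop F b ∘ₗ f) = Jop F (b + a) ∘ₗ f := by
  rw [← LinearMap.comp_assoc, Jop_comp]

lemma euler_comp_Jop' (F : Type*) [Field F] (a : ℤ) (f : (ℤ →₀ F) →ₗ[F] (ℤ →₀ F)) :
    euler F ∘ₗ (Jop F a ∘ₗ f) = Jop F a ∘ₗ (euler F ∘ₗ f) + (a : F) • (Jop F a ∘ₗ f) := by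
  rw [← LinearMap.comp_assoc, euler_comp_Jop, LinearMap.add_comp, LinearMap.smul_comp,
    LinearMap.comp_assoc]

lemma Lm_eq (F : Type*) [Field F] (hbar : F) (m : ℕ) (k : ℤ) :
    Lm F hbar m k =
      (-((1 : F) / ((m : F) + 1))) • (Jop F (((m : ℤ) + 1) * k) ∘ₗ euler F)
      + (-((1 : F) / ((m : F) + 1)) * ((((m : F) + 1) * (k : F) + 1) / 2)) •
          Jop F (((m : ℤ) + 1) * k)
      + (-((1 : F) / ((m : F) + 1)) * ((1 : F) / hbar)) •
          Jop F (((m : ℤ) + 1) * k + m) := by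
  simp only [Lm, LinearMap.comp_add, LinearMap.comp_smul, LinearMap.comp_id, smul_sub,
    smul_add, smul_neg, smul_smul, neg_add]
  module

/-- The commutation relations `[j_k, j_{k'}] = 0`, `[j_k, l_{k'}] = k·j_{k+k'}`,
`[l_k, l_{k'}] = (k−k')·l_{k+k'}` for the Virasoro part of the W-constraints of the
higher BGW tau-functions. -/
theorem stmt19 (F : Type*) [Field F] [CharZero F] (hbar : F) (hhbar : hbar ≠ 0)
    (m : ℕ) (hm : 0 < m) :
    (∀ k k' : ℤ, 1 ≤ k → 1 ≤ k' →
      Jm F m k ∘ₗ Jm F m k' - Jm F m k' ∘ₗ Jm F m k = 0) ∧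
    (∀ k k' : ℤ, 1 ≤ k → 0 ≤ k' →
      Jm F m k ∘ₗ Lm F hbar m k' - Lm F hbar m k' ∘ₗ Jm F m k = (k : F) • Jm F m (k + k')) ∧
    (∀ k k' : ℤ, 0 ≤ k → 0 ≤ k' →
      Lm F hbar m k ∘ₗ Lm F hbar m k' - Lm F hbar m k' ∘ₗ Lm F hbar m k =
        ((k : F) - (k' : F)) • Lm F hbar m (k + k')) := by
  have hm1 : ((m : F) + 1) ≠ 0 := Nat.cast_add_one_ne_zero m
  have hm1' : (1 + (m : F)) ≠ 0 := by rwa [add_comm]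
  have hc : (2 : F) + (m : F) * 4 + (m : F) ^ 2 * 2 ≠ 0 := by
    have h := mul_ne_zero (mul_ne_zero hm1 hm1) (two_ne_zero (α := F))
    intro h0
    exact h (by linear_combination h0)
  have hp : ∀ n : ℕ, ((1:F) + (m:F))^n ≠ 0 := fun n => pow_ne_zero n hm1'
  have d1 : (4:F) + (m:F)*24 + (m:F)^2*60 + (m:F)^3*80 + (m:F)^4*60 + (m:F)^5*24 + (m:F)^6*4 ≠ 0 := by
    intro h
    exact (mul_ne_zero (by norm_num : (4:F) ≠ 0) (hp 6)) (by linear_combination h)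
  have d2 : (4:F) + (m:F)*20 + (m:F)^2*40 + (m:F)^3*40 + (m:F)^4*20 + (m:F)^5*4 ≠ 0 := by
    intro h
    exact (mul_ne_zero (by norm_num : (4:F) ≠ 0) (hp 5)) (by linear_combination h)
  have d3 : (m:F)*hbar^3*24 + (m:F)^2*hbar^3*60 + (m:F)^3*hbar^3*80 + (m:F)^4*hbar^3*60 + (m:F)^5*hbar^3*24 + (m:F)^6*hbar^3*4 + hbar^3*4 ≠ 0 := by
    intro h
    exact (mul_ne_zero (mul_ne_zero (by norm_num : (4:F) ≠ 0) (pow_ne_zero 3 hhbar)) (hp 6)) (by linear_combination h)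
  refine ⟨?_, ?_, ?_⟩
  · intro k k' _ _
    simp only [Jm, LinearMap.comp_smul, LinearMap.smul_comp, Jop_comp, smul_smul]
    rw [show ((m : ℤ) + 1) * k' + ((m : ℤ) + 1) * k = ((m : ℤ) + 1) * k + ((m : ℤ) + 1) * k' from by ring]
    match_scalars <;> ring
  · intro k k' _ _
    simp only [Jm, Lm_eq, LinearMap.comp_add, LinearMap.add_comp, LinearMap.comp_smul,
      LinearMap.smul_comp, LinearMap.comp_assoc, euler_comp_Jop, euler_comp_Jop',
      Jop_comp, Jop_comp', smul_smul, smul_add]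
    simp only [show ((m:ℤ)+1)*k' + ((m:ℤ)+1)*k = ((m:ℤ)+1)*(k+k') from by ring,
      show ((m:ℤ)+1)*k + ((m:ℤ)+1)*k' = ((m:ℤ)+1)*(k+k') from by ring,
      show (((m:ℤ)+1)*k' + (m:ℤ)) + ((m:ℤ)+1)*k = ((m:ℤ)+1)*(k+k') + (m:ℤ) from by ring,
      show (((m:ℤ)+1)*k + (m:ℤ)) + ((m:ℤ)+1)*k' = ((m:ℤ)+1)*(k+k') + (m:ℤ) from by ring,
      show ((m:ℤ)+1)*k' + (((m:ℤ)+1)*k + (m:ℤ)) = ((m:ℤ)+1)*(k+k') + (m:ℤ) from by ring,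
      show ((m:ℤ)+1)*k + (((m:ℤ)+1)*k' + (m:ℤ)) = ((m:ℤ)+1)*(k+k') + (m:ℤ) from by ring,
      show (((m:ℤ)+1)*k' + (m:ℤ)) + (((m:ℤ)+1)*k + (m:ℤ)) = ((m:ℤ)+1)*(k+k') + 2*(m:ℤ) from by ring,
      show (((m:ℤ)+1)*k + (m:ℤ)) + (((m:ℤ)+1)*k' + (m:ℤ)) = ((m:ℤ)+1)*(k+k') + 2*(m:ℤ) from by ring]
    generalize hA : ((m:F) + 1) = A
    have hA0 : A ≠ 0 := hA ▸ hm1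
    have hmA : ((m:ℕ):F) = A - 1 := by rw [← hA]; ring
    match_scalars
    all_goals push_cast
    all_goals try simp only [hmA]
    all_goals try ring1
    all_goals try (field_simp; first | ring1 | (simp only [inv_pow]; field_simp; try ring1) | skip)
    all_goals try (rw [div_sub_div_same, div_mul_eq_mul_div, div_eq_iff (by simp [hA0, hhbar])]; ring1)
    all_goals try (rw [div_eq_iff (by simp [hA0, hhbar])]; ring1)
  · intro k k' _ _
    simp only [Lm_eq, Jm, LinearMap.comp_add, LinearMap.add_comp, LinearMap.comp_smul,
      LinearMap.smul_comp, LinearMap.comp_assoc, euler_comp_Jop, euler_comp_Jop',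
      Jop_comp, Jop_comp', smul_smul, smul_add]
    simp only [show ((m:ℤ)+1)*k' + ((m:ℤ)+1)*k = ((m:ℤ)+1)*(k+k') from by ring,
      show ((m:ℤ)+1)*k + ((m:ℤ)+1)*k' = ((m:ℤ)+1)*(k+k') from by ring,
      show (((m:ℤ)+1)*k' + (m:ℤ)) + ((m:ℤ)+1)*k = ((m:ℤ)+1)*(k+k') + (m:ℤ) from by ring,
      show (((m:ℤ)+1)*k + (m:ℤ)) + ((m:ℤ)+1)*k' = ((m:ℤ)+1)*(k+k') + (m:ℤ) from by ring,
      show ((m:ℤ)+1)*k' + (((m:ℤ)+1)*k + (m:ℤ)) = ((m:ℤ)+1)*(k+k') + (m:ℤ) from by ring,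
      show ((m:ℤ)+1)*k + (((m:ℤ)+1)*k' + (m:ℤ)) = ((m:ℤ)+1)*(k+k') + (m:ℤ) from by ring,
      show (((m:ℤ)+1)*k' + (m:ℤ)) + (((m:ℤ)+1)*k + (m:ℤ)) = ((m:ℤ)+1)*(k+k') + 2*(m:ℤ) from by ring,
      show (((m:ℤ)+1)*k + (m:ℤ)) + (((m:ℤ)+1)*k' + (m:ℤ)) = ((m:ℤ)+1)*(k+k') + 2*(m:ℤ) from by ring]
    generalize hA : ((m:F) + 1) = A
    have hA0 : A ≠ 0 := hA ▸ hm1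
    have hmA : ((m:ℕ):F) = A - 1 := by rw [← hA]; ring
    match_scalars
    all_goals push_cast
    all_goals try simp only [hmA]
    all_goals try ring1
    all_goals try (field_simp; first | ring1 | (simp only [inv_pow]; field_simp; try ring1) | skip)
    all_goals try (rw [div_sub_div_same, div_mul_eq_mul_div, div_eq_iff (by simp [hA0, hhbar])]; ring1)
    all_goals try (rw [div_eq_iff (by simp [hA0, hhbar])]; ring1)
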